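/- Let Σℓ ∈ ℝ^{ℓ×ℓ} be symmetric positive definite, Σh ∈ ℝ^{h×h} symmetric, and B, V ∈ ℝ^{ℓ×h} fixed matrices. Define, for S ∈ ℝ^{ℓ×h}, A(S) = B⊙S⊙V and f(S) = Tr((A(S)ᵀΣℓA(S))⁻¹ Σh) + log det(A(S)ᵀΣℓA(S)). Let S be such that A = A(S) satisfies that AᵀΣℓA is positive definite, and set Ã = (AᵀΣℓA)⁻¹. Then f has Fréchet derivative at S given by H ↦ Tr(Gᵀ H) with gradient G = 2 (B⊙V) ⊙ ((Σℓ A Ã)(I_h − Σh Ã)). -/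

import Mathlib

/-!
Write the objective as `g (X S)` with `X S = A(S)ᵀ Σℓ A(S)` and `g X = Tr(X⁻¹ Σh) + log det X`.
Jacobi's formula `d(det) X = Tr(adj X · _)` and the derivative `H ↦ -X⁻¹ H X⁻¹` of inversion give
`g` the Euclidean gradient `(X⁻¹ - X⁻¹ Σh X⁻¹)ᵀ`. The chain rule through the quadratic map
`A ↦ Aᵀ Σℓ A` turns a gradient `G` into `Σℓ A Gᵀ + Σℓᵀ A G`, and through the entrywise map
`S ↦ B ⊙ S ⊙ V` turns a gradient `P` into `(B ⊙ V) ⊙ P`, as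
`Tr(Pᵀ (B ⊙ H ⊙ V)) = Σᵢⱼ Pᵢⱼ Bᵢⱼ Hᵢⱼ Vᵢⱼ`. Symmetry of `Σℓ`, `Σh` and `X` collapses the result
to the stated formula.
-/

open Matrix

attribute [local instance] Matrix.normedAddCommGroup Matrix.normedSpace

/-- The continuous linear map `H ↦ Tr(Gᵀ H)` on `ℓ×h` real matrices. -/
noncomputable def traceCLM {ℓ h : ℕ} (G : Matrix (Fin ℓ) (Fin h) ℝ) :
    Matrix (Fin ℓ) (Fin h) ℝ →L[ℝ] ℝ :=
  LinearMap.toContinuousLinearMap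
    { toFun := fun H => (Gᵀ * H).trace
      map_add' := fun X Y => by simp [Matrix.mul_add]
      map_smul' := fun c X => by simp [Matrix.mul_smul] }

theorem map_ringInverse {M N F : Type*} [MonoidWithZero M] [MonoidWithZero N] [EquivLike F M N]
    [MulEquivClass F M N] (f : F) (x : M) : f (Ring.inverse x) = Ring.inverse (f x) := by
  by_cases hx : IsUnit x
  · obtain ⟨u, rfl⟩ := hx
    have hu : f u = (Units.map (f : M →* N) u : N) := rfl
    rw [Ring.inverse_unit, hu, Ring.inverse_unit]
    rfl
  · rw [Ring.inverse_non_unit _ hx, Ring.inverse_non_unit _ ((MulEquiv.isUnit_map f).not.2 hx),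
      map_zero]

namespace Matrix

theorem hasFDerivAt_inv {𝕜 n : Type*} [RCLike 𝕜] [Fintype n] [DecidableEq n]
    {M : Matrix n n 𝕜} (hM : IsUnit M) :
    HasFDerivAt (fun X : Matrix n n 𝕜 => X⁻¹)
      (LinearMap.toContinuousLinearMap (-(LinearMap.mulLeft 𝕜 M⁻¹ ∘ₗ LinearMap.mulRight 𝕜 M⁻¹)))
      M := by
  -- The sup norm on matrices is not submultiplicative, so transport `hasFDerivAt_ringInverse`
  -- from the Banach algebra of operators on Euclidean space.
  let φ := toEuclideanCLM (n := n) (𝕜 := 𝕜)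
  let e := φ.toAlgEquiv.toLinearEquiv.toContinuousLinearEquiv
  have he : ∀ X, e X = φ X := fun _ => rfl
  have hinv : (fun X : Matrix n n 𝕜 => X⁻¹) = e.symm ∘ Ring.inverse ∘ e := by
    funext X
    apply φ.injective
    simp [e, nonsing_inv_eq_ringInverse, map_ringInverse]
  obtain ⟨v, hv⟩ : IsUnit (e M) := hM.map φ
  have hv' : ((v⁻¹ : Units _) : EuclideanSpace 𝕜 n →L[𝕜] EuclideanSpace 𝕜 n) = e M⁻¹ := by
    rw [← Ring.inverse_unit, hv, he, he, nonsing_inv_eq_ringInverse, map_ringInverse]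
  have hφ := hasFDerivAt_ringInverse (𝕜 := 𝕜) v
  rw [hv, hv'] at hφ
  rw [hinv]
  refine (e.symm.hasFDerivAt.comp _ (hφ.comp _ e.hasFDerivAt)).congr_fderiv ?_
  ext1 H
  have hmul : e (M⁻¹ * H * M⁻¹) = e M⁻¹ * (e H * e M⁻¹) := by simp only [he, map_mul, mul_assoc]
  change -(e.symm (e M⁻¹ * (e H * e M⁻¹))) = -(M⁻¹ * (H * M⁻¹))
  rw [← hmul, e.symm_apply_apply, mul_assoc]

theorem hasFDerivAt_det {𝕜 n : Type*} [NontriviallyNormedField 𝕜] [CompleteSpace 𝕜]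
    [Fintype n] [DecidableEq n] (M : Matrix n n 𝕜) :
    HasFDerivAt det
      (LinearMap.toContinuousLinearMap (traceLinearMap n 𝕜 𝕜 ∘ₗ LinearMap.mulLeft 𝕜 M.adjugate))
      M := by
  let D : ContinuousMultilinearMap 𝕜 (fun _ : n => n → 𝕜) 𝕜 :=
    ⟨detRowAlternating.toMultilinearMap, continuous_id.matrix_det⟩
  refine (D.hasFDerivAt M).congr_fderiv ?_
  ext1 H
  erw [ContinuousMultilinearMap.linearDeriv_apply]
  -- Expanding `det` along the updated row `i` is a Cramer coordinate, i.e. column `i` of the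
  -- adjugate paired with `H i`.
  have hrow : ∀ i, D (Function.update M i (H i)) = ∑ j, M.adjugate j i * H i j := fun i =>
    (cramer_transpose_apply M (H i) i).symm.trans (by
      rw [cramer_eq_adjugate_mulVec, ← adjugate_transpose, mulVec, dotProduct]; rfl)
  simp only [hrow]
  rw [Finset.sum_comm]
  rfl

end Matrix

theorem traceCLM_add {ℓ h : ℕ} (G₁ G₂ : Matrix (Fin ℓ) (Fin h) ℝ) :
    traceCLM G₁ + traceCLM G₂ = traceCLM (G₁ + G₂) := by
  ext1 H
  show (G₁ᵀ * H).trace + (G₂ᵀ * H).trace = ((G₁ + G₂)ᵀ * H).trace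
  rw [transpose_add, Matrix.add_mul, trace_add]

theorem hasFDerivAt_log_det {n : ℕ} {M : Matrix (Fin n) (Fin n) ℝ} (hM : M.det ≠ 0) :
    HasFDerivAt (fun X : Matrix (Fin n) (Fin n) ℝ => Real.log X.det) (traceCLM M⁻¹ᵀ) M := by
  refine ((Real.hasDerivAt_log hM).comp_hasFDerivAt M (hasFDerivAt_det M)).congr_fderiv ?_
  ext1 H
  show M.det⁻¹ * (M.adjugate * H).trace = (M⁻¹ᵀᵀ * H).trace
  rw [transpose_transpose, inv_def, Ring.inverse_eq_inv', Matrix.smul_mul, trace_smul, smul_eq_mul]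

theorem hasFDerivAt_trace_inv_mul {n : ℕ} {M : Matrix (Fin n) (Fin n) ℝ} (hM : M.det ≠ 0)
    (C : Matrix (Fin n) (Fin n) ℝ) :
    HasFDerivAt (fun X : Matrix (Fin n) (Fin n) ℝ => (X⁻¹ * C).trace)
      (traceCLM (-(M⁻¹ * C * M⁻¹))ᵀ) M := by
  have hinv := hasFDerivAt_inv ((isUnit_iff_isUnit_det M).2 (isUnit_iff_ne_zero.2 hM))
  have htr : (fun X : Matrix (Fin n) (Fin n) ℝ => (X⁻¹ * C).trace) = traceCLM Cᵀ ∘ (·⁻¹) := by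
    funext X
    show (X⁻¹ * C).trace = (Cᵀᵀ * X⁻¹).trace
    rw [transpose_transpose, trace_mul_comm]
  rw [htr]
  refine ((traceCLM Cᵀ).hasFDerivAt.comp M hinv).congr_fderiv ?_
  ext1 H
  show (Cᵀᵀ * -(M⁻¹ * (H * M⁻¹))).trace = ((-(M⁻¹ * C * M⁻¹))ᵀᵀ * H).trace
  rw [transpose_transpose, transpose_transpose, Matrix.mul_neg, Matrix.neg_mul, trace_neg,
    trace_neg, neg_inj]
  simp only [← Matrix.mul_assoc]
  rw [trace_mul_comm (C * M⁻¹ * H), ← Matrix.mul_assoc, ← Matrix.mul_assoc]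

theorem Matrix.trace_transpose_mul_hadamard {m n R : Type*} [Fintype m] [Fintype n] [CommSemiring R]
    (P B H V : Matrix m n R) : (Pᵀ * (B ⊙ H ⊙ V)).trace = (((B ⊙ V) ⊙ P)ᵀ * H).trace := by
  rw [trace_mul_comm, trace_mul_comm _ H, ← sum_hadamard_eq, ← sum_hadamard_eq]
  refine Finset.sum_congr rfl fun i _ => Finset.sum_congr rfl fun j _ => ?_
  simp only [hadamard_apply]
  ring

theorem hasFDerivAt_comp_hadamard {ℓ h : ℕ} {φ : Matrix (Fin ℓ) (Fin h) ℝ → ℝ}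
    {P B V S : Matrix (Fin ℓ) (Fin h) ℝ} (hφ : HasFDerivAt φ (traceCLM P) (B ⊙ S ⊙ V)) :
    HasFDerivAt (fun T => φ (B ⊙ T ⊙ V)) (traceCLM ((B ⊙ V) ⊙ P)) S := by
  let L : Matrix (Fin ℓ) (Fin h) ℝ →L[ℝ] Matrix (Fin ℓ) (Fin h) ℝ := LinearMap.toContinuousLinearMap
    { toFun := fun T => B ⊙ T ⊙ V
      map_add' := fun _ _ => by rw [hadamard_add, add_hadamard]
      map_smul' := fun _ _ => by rw [hadamard_smul, smul_hadamard]; rfl }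
  refine (hφ.comp S L.hasFDerivAt).congr_fderiv ?_
  ext1 H
  exact trace_transpose_mul_hadamard P B H V

theorem hasFDerivAt_comp_transpose_mul_mul {ℓ h : ℕ} {g : Matrix (Fin h) (Fin h) ℝ → ℝ}
    {G : Matrix (Fin h) (Fin h) ℝ} (C : Matrix (Fin ℓ) (Fin ℓ) ℝ) {A : Matrix (Fin ℓ) (Fin h) ℝ}
    (hg : HasFDerivAt g (traceCLM G) (Aᵀ * C * A)) :
    HasFDerivAt (fun T => g (Tᵀ * C * T)) (traceCLM (C * A * Gᵀ + Cᵀ * A * G)) A := by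
  let β : Matrix (Fin ℓ) (Fin h) ℝ →L[ℝ] Matrix (Fin ℓ) (Fin h) ℝ →L[ℝ] Matrix (Fin h) (Fin h) ℝ :=
    LinearMap.toContinuousLinearMap (LinearMap.toContinuousLinearMap.toLinearMap ∘ₗ
      LinearMap.mk₂ ℝ (fun P Q => Pᵀ * C * Q)
        (fun _ _ _ => by rw [transpose_add, Matrix.add_mul, Matrix.add_mul])
        (fun _ _ _ => by rw [transpose_smul, Matrix.smul_mul, Matrix.smul_mul])
        (fun _ _ _ => Matrix.mul_add _ _ _)
        (fun _ _ _ => Matrix.mul_smul _ _ _))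
  have hq := β.hasFDerivAt_of_bilinear (hasFDerivAt_id A) (hasFDerivAt_id A)
  refine (hg.comp (f := fun T => Tᵀ * C * T) A hq).congr_fderiv ?_
  ext1 H
  show (Gᵀ * (Aᵀ * C * H + Hᵀ * C * A)).trace = ((C * A * Gᵀ + Cᵀ * A * G)ᵀ * H).trace
  have hswap : (Gᵀ * (Hᵀ * C * A)).trace = (G * (Aᵀ * (Cᵀ * H))).trace := by
    rw [← trace_transpose, trace_mul_comm]
    simp only [transpose_mul, transpose_transpose, Matrix.mul_assoc]
  rw [Matrix.mul_add, trace_add, hswap, add_comm]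
  simp only [transpose_add, transpose_mul, transpose_transpose, Matrix.add_mul, trace_add,
    Matrix.mul_assoc]

/-- Partial derivative w.r.t. `S` of the partial-prior objective
`f(S) = Tr((A(S)ᵀΣℓA(S))⁻¹ Σh) + log det(A(S)ᵀΣℓA(S))`, `A(S) = B⊙S⊙V`:
the Euclidean gradient at `S` is `2 (B⊙V) ⊙ ((Σℓ A Ã)(I_h − Σh Ã))`,
with `A = B⊙S⊙V` and `Ã = (AᵀΣℓA)⁻¹`. -/
theorem stmt_7 {ℓ h : ℕ}
    (Sl : Matrix (Fin ℓ) (Fin ℓ) ℝ) (hSl : Sl.PosDef)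
    (Sh : Matrix (Fin h) (Fin h) ℝ) (hSh : Sh.IsSymm)
    (B V S : Matrix (Fin ℓ) (Fin h) ℝ)
    (hpd : ((B ⊙ S ⊙ V)ᵀ * Sl * (B ⊙ S ⊙ V)).PosDef) :
    HasFDerivAt
      (fun T : Matrix (Fin ℓ) (Fin h) ℝ =>
        (((B ⊙ T ⊙ V)ᵀ * Sl * (B ⊙ T ⊙ V))⁻¹ * Sh).trace +
          Real.log ((B ⊙ T ⊙ V)ᵀ * Sl * (B ⊙ T ⊙ V)).det)
      (traceCLM ((2 : ℝ) •
        ((B ⊙ V) ⊙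
          ((Sl * (B ⊙ S ⊙ V) * ((B ⊙ S ⊙ V)ᵀ * Sl * (B ⊙ S ⊙ V))⁻¹) *
            (1 - Sh * ((B ⊙ S ⊙ V)ᵀ * Sl * (B ⊙ S ⊙ V))⁻¹)))))
      S := by
  set A := B ⊙ S ⊙ V
  set X := Aᵀ * Sl * A
  have hX : X.det ≠ 0 := hpd.det_pos.ne'
  have hSlT : Slᵀ = Sl := hSl.isHermitian
  have hXinvT : X⁻¹ᵀ = X⁻¹ := by
    rw [transpose_nonsing_inv, transpose_mul, transpose_mul, transpose_transpose, hSlT,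
      ← Matrix.mul_assoc]
  have hg := ((hasFDerivAt_trace_inv_mul hX Sh).fun_add (hasFDerivAt_log_det hX)).congr_fderiv
    (traceCLM_add _ _)
  convert hasFDerivAt_comp_hadamard (hasFDerivAt_comp_transpose_mul_mul Sl hg) using 2
  have hG : (-(X⁻¹ * Sh * X⁻¹))ᵀ + X⁻¹ᵀ = X⁻¹ * (1 - Sh * X⁻¹) := by
    rw [transpose_neg, transpose_mul, transpose_mul, hXinvT, hSh.eq, Matrix.mul_sub, Matrix.mul_one,
      neg_add_eq_sub]
  have hGT : (X⁻¹ * (1 - Sh * X⁻¹))ᵀ = X⁻¹ * (1 - Sh * X⁻¹) := by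
    rw [Matrix.mul_sub, Matrix.mul_one, transpose_sub, transpose_mul, transpose_mul, hXinvT, hSh.eq,
      Matrix.mul_assoc]
  rw [hG, hGT, hSlT, ← two_smul ℝ, hadamard_smul, Matrix.mul_assoc (Sl * A)]
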